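/- arXiv:hep-th/0605038 — 2 statements merged into one kernel-verified Lean document; each statement's English description precedes it below -/
import Mathlib

section
/- Let G be a finite abelian group with a nondegenerate symmetric Z/2-valued bilinear pairing b : G × G → Z/2, and let Ω : G → {±1} satisfy Ω(x+y) = Ω(x)Ω(y)(-1)^{b(x,y)} for all x,y. Then the Gauss sum arf(Ω) := |G|^{-1/2} Σ_{x∈G} Ω(x) takes values in {+1, -1}. -/
/-!
Expanding the square, `(∑ x, Ω x) ^ 2 = ∑ z, ∑ x, Ω x * Ω (z + x)`. The quadratic relation turns
the inner sum into `Ω z * ∑ x, (-1) ^ b(z, x)`, a sum over the character `x ↦ (-1) ^ b(z, x)`,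
which vanishes for `z ≠ 0` by nondegeneracy; at `z = 0` it is `∑ x, Ω x ^ 2 = |G|`. Hence the
Gauss sum has absolute value `√|G|`.
-/

open Finset

section GaussSum

variable {G R : Type*} [AddCommGroup G] [Fintype G] [CommRing R] [IsDomain R]

theorem sum_neg_one_pow_val_eq_zero (hR : (-1 : R) ≠ 1) {f : G →+ ZMod 2} (hf : f ≠ 0) :
    ∑ x, (-1 : R) ^ (f x).val = 0 := by
  let ψ : AddChar G R :=
    (AddChar.zmodChar 2 (by norm_num : (-1 : R) ^ 2 = 1)).compAddMonoidHom f
  have hψ : ψ ≠ 1 := by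
    obtain ⟨y, hy⟩ := DFunLike.ne_iff.mp hf
    have hy : f y = 1 := (by decide : ∀ a : ZMod 2, a ≠ 0 → a = 1) _ hy
    refine AddChar.ne_one_iff.mpr ⟨y, ?_⟩
    simpa [ψ, AddChar.zmodChar_apply, hy, show (1 : ZMod 2).val = 1 from rfl] using hR
  simpa [ψ, AddChar.zmodChar_apply] using AddChar.sum_eq_zero_of_ne_one hψ

variable {b : G → G → ZMod 2} {Ω : G → R}

theorem sum_mul_apply_add_eq_zero (hR : (-1 : R) ≠ 1)
    (hbadd : ∀ x y z, b x (y + z) = b x y + b x z) (hbnd : ∀ x, (∀ y, b x y = 0) → x = 0)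
    (hΩ : ∀ x, Ω x * Ω x = 1)
    (hquad : ∀ x y, Ω (x + y) = Ω x * Ω y * (-1 : R) ^ (b x y).val) {z : G} (hz : z ≠ 0) :
    ∑ x, Ω x * Ω (z + x) = 0 := by
  let f : G →+ ZMod 2 := AddMonoidHom.mk' (b z) (hbadd z)
  have hf : f ≠ 0 := fun h => hz (hbnd z fun y => DFunLike.congr_fun h y)
  have hchar : ∑ x, (-1 : R) ^ (b z x).val = 0 := sum_neg_one_pow_val_eq_zero hR hf
  calc ∑ x, Ω x * Ω (z + x) = Ω z * ∑ x, (-1 : R) ^ (b z x).val := by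
        rw [mul_sum]
        refine sum_congr rfl fun x _ => ?_
        rw [hquad]
        linear_combination (Ω z * (-1 : R) ^ (b z x).val) * hΩ x
    _ = 0 := by rw [hchar, mul_zero]

theorem sum_sq_eq_card (hR : (-1 : R) ≠ 1)
    (hbadd : ∀ x y z, b x (y + z) = b x y + b x z) (hbnd : ∀ x, (∀ y, b x y = 0) → x = 0)
    (hΩ : ∀ x, Ω x * Ω x = 1)
    (hquad : ∀ x y, Ω (x + y) = Ω x * Ω y * (-1 : R) ^ (b x y).val) :
    (∑ x, Ω x) ^ 2 = Fintype.card G := by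
  calc (∑ x, Ω x) ^ 2 = ∑ z, ∑ x, Ω x * Ω (z + x) := by
        rw [sq, sum_mul_sum, sum_comm (f := fun z x => Ω x * Ω (z + x))]
        refine sum_congr rfl fun x _ => ?_
        exact (Fintype.sum_equiv (Equiv.addRight x) _ _ fun _ => rfl).symm
    _ = ∑ x, Ω x * Ω (0 + x) := by
        refine Fintype.sum_eq_single 0 fun z hz => ?_
        exact sum_mul_apply_add_eq_zero hR hbadd hbnd hΩ hquad hz
    _ = Fintype.card G := by simp [hΩ]

end GaussSum

theorem inv_sqrt_mul_eq_one_or_eq_neg_one {S c : ℝ} (hc : 0 < c) (hS : S ^ 2 = c) :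
    (√c)⁻¹ * S = 1 ∨ (√c)⁻¹ * S = -1 := by
  have hsqrt : 0 < √c := Real.sqrt_pos.mpr hc
  rcases (abs_eq hsqrt.le).mp (by rw [← Real.sqrt_sq_eq_abs, hS]) with h | h
  · left; rw [h, inv_mul_cancel₀ hsqrt.ne']
  · right; rw [h, mul_neg, inv_mul_cancel₀ hsqrt.ne']

theorem arf_invariant_pm_one_general {G : Type*} [AddCommGroup G] [Fintype G]
    (b : G → G → ZMod 2)
    (hbadd₂ : ∀ x y z, b x (y + z) = b x y + b x z)
    (hbnd : ∀ x, (∀ y, b x y = 0) → x = 0)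
    (Ω : G → ℝ)
    (hval : ∀ x, Ω x = 1 ∨ Ω x = -1)
    (hquad : ∀ x y, Ω (x + y) = Ω x * Ω y * (-1 : ℝ) ^ (b x y).val) :
    (Real.sqrt (Fintype.card G))⁻¹ * ∑ x, Ω x = 1 ∨
      (Real.sqrt (Fintype.card G))⁻¹ * ∑ x, Ω x = -1 :=
  inv_sqrt_mul_eq_one_or_eq_neg_one (by exact_mod_cast Fintype.card_pos)
    (sum_sq_eq_card (by norm_num) hbadd₂ hbnd
      (fun x => by rcases hval x with h | h <;> simp [h]) hquad)

/-- Let `G` be a finite abelian group with a nondegenerate symmetric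
`ℤ/2`-valued bilinear pairing `b`, and let `Ω : G → {±1}` satisfy
`Ω(x+y) = Ω(x)Ω(y)(-1)^{b(x,y)}`.  Then the Gauss sum
`arf(Ω) := |G|^{-1/2} ∑_{x ∈ G} Ω(x)` takes values in `{+1, -1}`. -/
theorem arf_invariant_pm_one {G : Type*} [AddCommGroup G] [Fintype G]
    (b : G → G → ZMod 2)
    (hbadd₁ : ∀ x y z, b (x + y) z = b x z + b y z)
    (hbadd₂ : ∀ x y z, b x (y + z) = b x y + b x z)
    (hbsymm : ∀ x y, b x y = b y x)
    (hbnd : ∀ x, (∀ y, b x y = 0) → x = 0)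
    (Ω : G → ℝ)
    (hval : ∀ x, Ω x = 1 ∨ Ω x = -1)
    (hquad : ∀ x y, Ω (x + y) = Ω x * Ω y * (-1 : ℝ) ^ (b x y).val) :
    (Real.sqrt (Fintype.card G))⁻¹ * ∑ x, Ω x = 1 ∨
      (Real.sqrt (Fintype.card G))⁻¹ * ∑ x, Ω x = -1 :=
  arf_invariant_pm_one_general b hbadd₂ hbnd Ω hval hquad
end

section
/- Let G be a finite abelian group with a symmetric Z/2-valued bilinear pairing b, let {Ω_s} be the set of functions Ω : G → {±1} with Ω(x+y) = Ω(x)Ω(y)(-1)^{b(x,y)}, which is a torsor for Hom(G, Z/2). Define q(s) := arf(Ω_s) = |G|^{-1/2} Σ_x Ω_s(x). Then for any s and any x ∈ G, q(s+x) = q(s)·Ω_s(x), where s+x denotes the translate of Ω_s by the character y ↦ (-1)^{b(x,y)}. -/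
/-- The Arf invariant (normalized Gauss sum) `arf(Ω) = |G|^{-1/2} ∑_{x ∈ G} Ω(x)`. -/
noncomputable def arf {G : Type*} [Fintype G] (Ω : G → ℝ) : ℝ :=
  (Real.sqrt (Fintype.card G))⁻¹ * ∑ x, Ω x

/-- Let `G` be a finite abelian group with a nondegenerate symmetric
`ℤ/2`-valued pairing `b`, and let `{Ω_s}` be the torsor of `{±1}`-valued quadratic
refinements of `(-1)^b`, acted on by `x ∈ G` via `Ω_{s+x}(y) := Ω_s(y)(-1)^{b(x,y)}`.
With `q(s) := arf(Ω_s)`, one has `q(s+x) = q(s) · Ω_s(x)` for all `x ∈ G`. -/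
theorem arf_translate {G : Type*} [AddCommGroup G] [Fintype G]
    (b : G → G → ZMod 2)
    (hbadd₁ : ∀ x y z, b (x + y) z = b x z + b y z)
    (hbadd₂ : ∀ x y z, b x (y + z) = b x y + b x z)
    (hbsymm : ∀ x y, b x y = b y x)
    (hbnd : ∀ x, (∀ y, b x y = 0) → x = 0)
    (Ω : G → ℝ)
    (hval : ∀ x, Ω x = 1 ∨ Ω x = -1)
    (hquad : ∀ x y, Ω (x + y) = Ω x * Ω y * (-1 : ℝ) ^ (b x y).val)
    (x : G) :
    arf (fun y => Ω y * (-1 : ℝ) ^ (b x y).val) = arf Ω * Ω x := by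
  have hsq : Ω x * Ω x = 1 := by rcases hval x with h | h <;> rw [h] <;> ring
  have key : ∑ y, Ω y * (-1 : ℝ) ^ (b x y).val = Ω x * ∑ y, Ω y := by
    have h1 : ∀ y, Ω y * (-1 : ℝ) ^ (b x y).val = Ω x * Ω (x + y) := by
      intro y
      rw [hquad x y]
      linear_combination (- Ω y * (-1 : ℝ) ^ (b x y).val) * hsq
    simp_rw [h1]
    rw [← Finset.mul_sum]
    congr 1
    exact Fintype.sum_equiv (Equiv.addLeft x) _ _ (fun y => rfl)
  unfold arf
  rw [key]
  ring
end
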